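/- arXiv:2407.10680 — 2 statements merged into one kernel-verified Lean document; each statement's English description precedes it below -/
import Mathlib

section
/- Let s ∈ [−1,1]^n with sᵀLs > 0, let 0 < ε < 1/2, and let q ∈ ℝ^n satisfy ‖q − (I + L)^{−1} s‖_{I+L} ≤ δ·‖(I + L)^{−1} s‖_{I+L} for some δ with 0 < δ ≤ ε·‖s‖_L/(6·√2·n²), where ‖s‖_L = √(sᵀLs). Then (1 − ε)·sᵀ(I + L)^{−1} L (I + L)^{−1} s ≤ qᵀ L q ≤ (1 + ε)·sᵀ(I + L)^{−1} L (I + L)^{−1} s. -/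
/-!
Put `x = (I + L)⁻¹ s`, so that the comparison value is `xᵀ L x` and `q = x + d` with
`qᵀ L q = xᵀ L x + 2 xᵀ L d + dᵀ L d`. By Cauchy–Schwarz for the semi-inner product of `L`, the
claim follows once `dᵀ L d ≤ η² xᵀ L x` with `η = 3ε/8`. The error is small in absolute terms:
`dᵀ L d ≤ ‖d‖²_{I+L} ≤ δ² ‖x‖²_{I+L} = δ² sᵀ(I + L)⁻¹ s ≤ δ² ‖s‖² ≤ δ² n`. The target is not too
small: `sᵀ L s = xᵀ (L + 2L² + L³) x ≤ (1 + 2n)² xᵀ L x`, because the signed Laplacian satisfies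
`L ≤ 2n I`. The bound on `δ` is what makes the two estimates meet.
-/

open Matrix

/-- The norm of a vector `x` with respect to a matrix `K`: `‖x‖_K = √(xᵀ K x)`. -/
noncomputable def matNorm {m : Type*} [Fintype m] (K : Matrix m m ℝ) (x : m → ℝ) : ℝ :=
  Real.sqrt (x ⬝ᵥ K *ᵥ x)

open scoped MatrixOrder

namespace Matrix

lemma PosSemidef.isSymm {m : Type*} {K : Matrix m m ℝ} (hK : K.PosSemidef) : K.IsSymm :=
  isHermitian_iff_isSymm.mp hK.isHermitian

variable {m : Type*} [Fintype m]

lemma IsSymm.mulVec_dotProduct {K : Matrix m m ℝ} (hK : K.IsSymm) (v w : m → ℝ) :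
    K *ᵥ v ⬝ᵥ w = v ⬝ᵥ K *ᵥ w := by
  rw [dotProduct_mulVec, ← mulVec_transpose, hK.eq]

lemma IsSymm.dotProduct_mulVec_comm {K : Matrix m m ℝ} (hK : K.IsSymm) (v w : m → ℝ) :
    v ⬝ᵥ K *ᵥ w = w ⬝ᵥ K *ᵥ v := by
  rw [← hK.mulVec_dotProduct, dotProduct_comm]

lemma IsSymm.dotProduct_mul_mul_mulVec {S : Matrix m m ℝ} (hS : S.IsSymm) (K : Matrix m m ℝ)
    (v : m → ℝ) : v ⬝ᵥ (S * K * S) *ᵥ v = (S *ᵥ v) ⬝ᵥ K *ᵥ (S *ᵥ v) := by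
  rw [← mulVec_mulVec, ← mulVec_mulVec, dotProduct_mulVec, ← mulVec_transpose, hS.eq]

lemma PosSemidef.dotProduct_mulVec_self_nonneg {K : Matrix m m ℝ} (hK : K.PosSemidef)
    (v : m → ℝ) : 0 ≤ v ⬝ᵥ K *ᵥ v := by
  simpa using hK.dotProduct_mulVec_nonneg v

variable [DecidableEq m] {K : Matrix m m ℝ}

lemma PosSemidef.dotProduct_mulVec_eq_sqrt (hK : K.PosSemidef) (v w : m → ℝ) :
    v ⬝ᵥ K *ᵥ w = (CFC.sqrt K *ᵥ v) ⬝ᵥ (CFC.sqrt K *ᵥ w) := by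
  have hS : (CFC.sqrt K).IsSymm := (CFC.sqrt_nonneg K).posSemidef.isSymm
  conv_lhs => rw [← CFC.sqrt_mul_sqrt_self K hK.nonneg, ← mulVec_mulVec, dotProduct_mulVec,
    ← mulVec_transpose, hS.eq]

lemma PosSemidef.dotProduct_mulVec_sq_le (hK : K.PosSemidef) (v w : m → ℝ) :
    (v ⬝ᵥ K *ᵥ w) ^ 2 ≤ (v ⬝ᵥ K *ᵥ v) * (w ⬝ᵥ K *ᵥ w) := by
  rw [hK.dotProduct_mulVec_eq_sqrt v w, hK.dotProduct_mulVec_eq_sqrt v v,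
    hK.dotProduct_mulVec_eq_sqrt w w]
  simpa only [dotProduct, sq] using Finset.sum_mul_sq_le_sq_mul_sq Finset.univ _ _

lemma PosSemidef.mulVec_dotProduct_mulVec_le (hK : K.PosSemidef) {c : ℝ}
    (hc : ∀ v, v ⬝ᵥ K *ᵥ v ≤ c * (v ⬝ᵥ v)) (v : m → ℝ) :
    K *ᵥ v ⬝ᵥ K *ᵥ v ≤ c * (v ⬝ᵥ K *ᵥ v) := by
  -- apply the hypothesis to `√K v`: `(√K v)ᵀ K (√K v) = vᵀ K² v`
  have hS : (CFC.sqrt K).IsSymm := (CFC.sqrt_nonneg K).posSemidef.isSymm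
  have h := hc (CFC.sqrt K *ᵥ v)
  rw [← hK.dotProduct_mulVec_eq_sqrt, ← hS.dotProduct_mul_mul_mulVec] at h
  set S := CFC.sqrt K
  have hSS : S * S = K := CFC.sqrt_mul_sqrt_self K hK.nonneg
  have hSKS : S * K * S = K * K := by rw [← hSS]; simp only [mul_assoc]
  rwa [hSKS, ← mulVec_mulVec, ← hK.isSymm.mulVec_dotProduct] at h

lemma PosSemidef.dotProduct_add_mulVec_le (hK : K.PosSemidef) {c : ℝ} (hc0 : 0 ≤ c)
    (hc : ∀ v, v ⬝ᵥ K *ᵥ v ≤ c * (v ⬝ᵥ v)) (v : m → ℝ) :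
    (v + K *ᵥ v) ⬝ᵥ K *ᵥ (v + K *ᵥ v) ≤ (1 + c) ^ 2 * (v ⬝ᵥ K *ᵥ v) := by
  have hK2 := hK.mulVec_dotProduct_mulVec_le hc v
  have hK3 := (hc (K *ᵥ v)).trans (mul_le_mul_of_nonneg_left hK2 hc0)
  have hexp : (v + K *ᵥ v) ⬝ᵥ K *ᵥ (v + K *ᵥ v)
      = v ⬝ᵥ K *ᵥ v + 2 * (K *ᵥ v ⬝ᵥ K *ᵥ v) + K *ᵥ v ⬝ᵥ K *ᵥ (K *ᵥ v) := by
    rw [mulVec_add, add_dotProduct, dotProduct_add, dotProduct_add,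
      ← hK.isSymm.mulVec_dotProduct v (K *ᵥ v)]
    ring
  rw [hexp]
  nlinarith

lemma PosSemidef.abs_dotProduct_add_mulVec_add_sub_le (hK : K.PosSemidef) {x d : m → ℝ}
    {η : ℝ} (hη : 0 ≤ η) (hd : d ⬝ᵥ K *ᵥ d ≤ η ^ 2 * (x ⬝ᵥ K *ᵥ x)) :
    |(x + d) ⬝ᵥ K *ᵥ (x + d) - x ⬝ᵥ K *ᵥ x| ≤ (2 * η + η ^ 2) * (x ⬝ᵥ K *ᵥ x) := by
  have hx := hK.dotProduct_mulVec_self_nonneg x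
  have hcross : |x ⬝ᵥ K *ᵥ d| ≤ η * (x ⬝ᵥ K *ᵥ x) := by
    refine abs_le_of_sq_le_sq ?_ (by positivity)
    calc (x ⬝ᵥ K *ᵥ d) ^ 2 ≤ (x ⬝ᵥ K *ᵥ x) * (d ⬝ᵥ K *ᵥ d) := hK.dotProduct_mulVec_sq_le x d
      _ ≤ (x ⬝ᵥ K *ᵥ x) * (η ^ 2 * (x ⬝ᵥ K *ᵥ x)) := by gcongr
      _ = (η * (x ⬝ᵥ K *ᵥ x)) ^ 2 := by ring
  have hexp : (x + d) ⬝ᵥ K *ᵥ (x + d) - x ⬝ᵥ K *ᵥ x = 2 * (x ⬝ᵥ K *ᵥ d) + d ⬝ᵥ K *ᵥ d := by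
    rw [mulVec_add, add_dotProduct, dotProduct_add, dotProduct_add,
      hK.isSymm.dotProduct_mulVec_comm d x]
    ring
  rw [hexp, abs_le]
  have hd0 := hK.dotProduct_mulVec_self_nonneg d
  constructor <;> linarith [abs_le.mp hcross]

lemma PosSemidef.dotProduct_le_of_one_add_mulVec_eq (hK : K.PosSemidef) {x s : m → ℝ}
    (h : (1 + K) *ᵥ x = s) : x ⬝ᵥ s ≤ s ⬝ᵥ s := by
  have hxs : x ⬝ᵥ s = x ⬝ᵥ x + x ⬝ᵥ K *ᵥ x := by
    rw [← h, add_mulVec, one_mulVec, dotProduct_add]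
  have hcs := PosSemidef.one.dotProduct_mulVec_sq_le x s
  simp only [one_mulVec] at hcs
  have hx := hK.dotProduct_mulVec_self_nonneg x
  have hxx : 0 ≤ x ⬝ᵥ x := Finset.sum_nonneg fun i _ => mul_self_nonneg (x i)
  have hss : 0 ≤ s ⬝ᵥ s := Finset.sum_nonneg fun i _ => mul_self_nonneg (s i)
  nlinarith [mul_nonneg hx hss]

lemma PosSemidef.dotProduct_sub_mulVec_sub_le_of_matNorm_le (hK : K.PosSemidef)
    {x s q : m → ℝ} (hx : (1 + K) *ᵥ x = s) {δ : ℝ}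
    (hq : matNorm (1 + K) (q - x) ≤ δ * matNorm (1 + K) x) :
    (q - x) ⬝ᵥ K *ᵥ (q - x) ≤ δ ^ 2 * (s ⬝ᵥ s) := by
  have hM : (1 + K).PosSemidef := PosSemidef.one.add hK
  unfold matNorm at hq
  have h := pow_le_pow_left₀ (Real.sqrt_nonneg _) hq 2
  rw [mul_pow, Real.sq_sqrt (hM.dotProduct_mulVec_self_nonneg _),
    Real.sq_sqrt (hM.dotProduct_mulVec_self_nonneg _), hx, add_mulVec, one_mulVec,
    dotProduct_add] at h
  have hd : 0 ≤ (q - x) ⬝ᵥ (q - x) := Finset.sum_nonneg fun i _ => mul_self_nonneg _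
  nlinarith [mul_le_mul_of_nonneg_left (hK.dotProduct_le_of_one_add_mulVec_eq hx) (sq_nonneg δ)]

lemma PosSemidef.abs_dotProduct_mulVec_sub_le_of_matNorm_le (hK : K.PosSemidef) {c : ℝ}
    (hc0 : 0 ≤ c) (hc : ∀ v, v ⬝ᵥ K *ᵥ v ≤ c * (v ⬝ᵥ v)) {x s q : m → ℝ}
    (hx : (1 + K) *ᵥ x = s) {δ : ℝ} (hq : matNorm (1 + K) (q - x) ≤ δ * matNorm (1 + K) x)
    {η : ℝ} (hη : 0 ≤ η) (hδη : δ ^ 2 * (1 + c) ^ 2 * (s ⬝ᵥ s) ≤ η ^ 2 * (s ⬝ᵥ K *ᵥ s)) :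
    |q ⬝ᵥ K *ᵥ q - x ⬝ᵥ K *ᵥ x| ≤ (2 * η + η ^ 2) * (x ⬝ᵥ K *ᵥ x) := by
  have herr := hK.dotProduct_sub_mulVec_sub_le_of_matNorm_le hx hq
  have hs : s ⬝ᵥ K *ᵥ s ≤ (1 + c) ^ 2 * (x ⬝ᵥ K *ᵥ x) := by
    rw [← hx, add_mulVec, one_mulVec]
    exact hK.dotProduct_add_mulVec_le hc0 hc x
  have hrel : (q - x) ⬝ᵥ K *ᵥ (q - x) ≤ η ^ 2 * (x ⬝ᵥ K *ᵥ x) := by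
    refine le_of_mul_le_mul_left ?_ (by positivity : (0 : ℝ) < (1 + c) ^ 2)
    calc (1 + c) ^ 2 * ((q - x) ⬝ᵥ K *ᵥ (q - x)) ≤ δ ^ 2 * (1 + c) ^ 2 * (s ⬝ᵥ s) := by
          nlinarith [mul_le_mul_of_nonneg_left herr (sq_nonneg (1 + c))]
      _ ≤ η ^ 2 * (s ⬝ᵥ K *ᵥ s) := hδη
      _ ≤ η ^ 2 * ((1 + c) ^ 2 * (x ⬝ᵥ K *ᵥ x)) := by gcongr
      _ = (1 + c) ^ 2 * (η ^ 2 * (x ⬝ᵥ K *ᵥ x)) := by ring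
  simpa using hK.abs_dotProduct_add_mulVec_add_sub_le hη hrel

end Matrix

variable {m : Type*} [Fintype m]

lemma dotProduct_self_le_card {s : m → ℝ} (hs : ∀ i, s i ∈ Set.Icc (-1 : ℝ) 1) :
    s ⬝ᵥ s ≤ Fintype.card m := by
  calc s ⬝ᵥ s ≤ ∑ _i : m, (1 : ℝ) :=
        Finset.sum_le_sum fun i _ => by nlinarith [(hs i).1, (hs i).2]
    _ = Fintype.card m := by simp

lemma two_mul_mul_mul_le_abs_mul_sq_add_sq (a x y : ℝ) :
    2 * a * x * y ≤ |a| * (x ^ 2 + y ^ 2) := by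
  rcases abs_cases a with ⟨h, -⟩ | ⟨h, -⟩ <;> rw [h] <;>
    nlinarith [mul_nonneg (abs_nonneg a) (sq_nonneg (x - y)),
      mul_nonneg (abs_nonneg a) (sq_nonneg (x + y))]

variable [DecidableEq m]

noncomputable def signedLaplacian (A : Matrix m m ℝ) : Matrix m m ℝ :=
  diagonal (fun i => ∑ j, |A i j|) - A

lemma two_mul_dotProduct_signedLaplacian_mulVec {A : Matrix m m ℝ} (hA : A.IsSymm) (v : m → ℝ) :
    2 * (v ⬝ᵥ signedLaplacian A *ᵥ v)
      = ∑ i, ∑ j, (|A i j| * (v i ^ 2 + v j ^ 2) - 2 * A i j * v i * v j) := by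
  have hdeg : ∑ i, ∑ j, |A i j| * v j ^ 2 = ∑ i, ∑ j, |A i j| * v i ^ 2 := by
    rw [Finset.sum_comm]
    simp only [hA.apply]
  have hdiag : v ⬝ᵥ diagonal (fun i => ∑ j, |A i j|) *ᵥ v = ∑ i, ∑ j, |A i j| * v i ^ 2 := by
    simp only [dotProduct, mulVec_diagonal, Finset.mul_sum, Finset.sum_mul]
    exact Finset.sum_congr rfl fun i _ => Finset.sum_congr rfl fun j _ => by ring
  have hoff : 2 * (v ⬝ᵥ A *ᵥ v) = ∑ i, ∑ j, 2 * A i j * v i * v j := by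
    simp only [dotProduct, mulVec, Finset.mul_sum]
    exact Finset.sum_congr rfl fun i _ => Finset.sum_congr rfl fun j _ => by ring
  rw [signedLaplacian, sub_mulVec, dotProduct_sub, mul_sub, hoff, hdiag]
  simp only [Finset.sum_sub_distrib, Finset.sum_add_distrib, hdeg, mul_add]
  ring

lemma signedLaplacian_posSemidef {A : Matrix m m ℝ} (hA : A.IsSymm) :
    (signedLaplacian A).PosSemidef := by
  refine .of_dotProduct_mulVec_nonneg
    (isHermitian_iff_isSymm.mpr ((isSymm_diagonal _).sub hA)) fun v => ?_
  have h := two_mul_dotProduct_signedLaplacian_mulVec hA v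
  have hterms : 0 ≤ ∑ i, ∑ j, (|A i j| * (v i ^ 2 + v j ^ 2) - 2 * A i j * v i * v j) :=
    Finset.sum_nonneg fun i _ => Finset.sum_nonneg fun j _ =>
      sub_nonneg.mpr (two_mul_mul_mul_le_abs_mul_sq_add_sq _ _ _)
  simp only [star_trivial]
  linarith

lemma dotProduct_signedLaplacian_mulVec_le {A : Matrix m m ℝ} (hA : A.IsSymm)
    (hA1 : ∀ i j, |A i j| ≤ 1) (v : m → ℝ) :
    v ⬝ᵥ signedLaplacian A *ᵥ v ≤ 2 * Fintype.card m * (v ⬝ᵥ v) := by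
  have h := two_mul_dotProduct_signedLaplacian_mulVec hA v
  have hterms : ∑ i, ∑ j, (|A i j| * (v i ^ 2 + v j ^ 2) - 2 * A i j * v i * v j)
      ≤ ∑ i : m, ∑ j : m, 2 * (v i ^ 2 + v j ^ 2) := by
    refine Finset.sum_le_sum fun i _ => Finset.sum_le_sum fun j _ => ?_
    have := two_mul_mul_mul_le_abs_mul_sq_add_sq (-A i j) (v i) (v j)
    rw [abs_neg] at this
    nlinarith [hA1 i j, sq_nonneg (v i), sq_nonneg (v j)]
  have hsum : ∑ i : m, ∑ j : m, 2 * (v i ^ 2 + v j ^ 2) = 4 * Fintype.card m * (v ⬝ᵥ v) := by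
    simp only [mul_add, Finset.sum_add_distrib, Finset.sum_const, Finset.card_univ, dotProduct,
      ← Finset.mul_sum, nsmul_eq_mul, sq]
    ring
  linarith

lemma sq_mul_one_add_two_mul_sq_mul_le {N S b δ ε : ℝ} (hN : 1 ≤ N) (hS : S ≤ N) (hb : 0 ≤ b)
    (hδ : 0 ≤ δ) (h : δ ≤ ε * Real.sqrt b / (6 * Real.sqrt 2 * N ^ 2)) :
    δ ^ 2 * (1 + 2 * N) ^ 2 * S ≤ (3 * ε / 8) ^ 2 * b := by
  have hδ2 : δ ^ 2 * (72 * N ^ 4) ≤ ε ^ 2 * b := by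
    have h2 := pow_le_pow_left₀ hδ h 2
    rw [div_pow, mul_pow, mul_pow, mul_pow, Real.sq_sqrt hb, Real.sq_sqrt zero_le_two,
      le_div_iff₀ (by positivity)] at h2
    linarith
  have hpoly : (1 + 2 * N) ^ 2 * N ≤ 72 * N ^ 4 * (3 / 8) ^ 2 := by
    nlinarith [pow_le_pow_right₀ hN (by norm_num : 1 ≤ 4),
      pow_le_pow_right₀ hN (by norm_num : 2 ≤ 4), pow_le_pow_right₀ hN (by norm_num : 3 ≤ 4)]
  calc δ ^ 2 * (1 + 2 * N) ^ 2 * S ≤ δ ^ 2 * ((1 + 2 * N) ^ 2 * N) := by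
        rw [mul_assoc]; gcongr
    _ ≤ δ ^ 2 * (72 * N ^ 4 * (3 / 8) ^ 2) := by gcongr
    _ = (3 / 8) ^ 2 * (δ ^ 2 * (72 * N ^ 4)) := by ring
    _ ≤ (3 / 8) ^ 2 * (ε ^ 2 * b) := by gcongr
    _ = (3 * ε / 8) ^ 2 * b := by ring

theorem stmt_14_general (n : ℕ) (hn : 1 ≤ n) (A : Matrix (Fin n) (Fin n) ℝ)
    (hAsymm : A.IsSymm)
    (hAval : ∀ i j, A i j = -1 ∨ A i j = 0 ∨ A i j = 1)
    (D L : Matrix (Fin n) (Fin n) ℝ)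
    (hD : D = Matrix.diagonal fun i => ∑ j, |A i j|)
    (hL : L = D - A)
    (s : Fin n → ℝ) (hs : ∀ i, s i ∈ Set.Icc (-1 : ℝ) 1)
    (hsL : 0 < s ⬝ᵥ L *ᵥ s)
    (ε : ℝ) (hε : 0 < ε) (hε' : ε < 1 / 2)
    (δ : ℝ) (hδ : 0 < δ)
    (hδ' : δ ≤ ε * Real.sqrt (s ⬝ᵥ L *ᵥ s) / (6 * Real.sqrt 2 * (n : ℝ) ^ 2))
    (q : Fin n → ℝ)
    (hq : matNorm (1 + L) (q - (1 + L)⁻¹ *ᵥ s) ≤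
      δ * matNorm (1 + L) ((1 + L)⁻¹ *ᵥ s)) :
    (1 - ε) * (s ⬝ᵥ ((1 + L)⁻¹ * L * (1 + L)⁻¹) *ᵥ s) ≤ q ⬝ᵥ L *ᵥ q ∧
    q ⬝ᵥ L *ᵥ q ≤ (1 + ε) * (s ⬝ᵥ ((1 + L)⁻¹ * L * (1 + L)⁻¹) *ᵥ s) := by
  have hLA : L = signedLaplacian A := by rw [hL, hD]; rfl
  have hA1 : ∀ i j, |A i j| ≤ 1 := fun i j => by rcases hAval i j with h | h | h <;> simp [h]
  have hLpsd : L.PosSemidef := hLA ▸ signedLaplacian_posSemidef hAsymm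
  have hLle : ∀ v, v ⬝ᵥ L *ᵥ v ≤ 2 * n * (v ⬝ᵥ v) := by
    simpa [hLA] using dotProduct_signedLaplacian_mulVec_le hAsymm hA1
  rw [(PosSemidef.one.add hLpsd).inv.isSymm.dotProduct_mul_mul_mulVec]
  set x := (1 + L)⁻¹ *ᵥ s
  have hMx : (1 + L) *ᵥ x = s := by
    rw [mulVec_mulVec, mul_nonsing_inv _
      ((PosDef.one.add_posSemidef hLpsd).isUnit.map detMonoidHom), one_mulVec]
  have hN : (1 : ℝ) ≤ n := by exact_mod_cast hn
  have hδη := sq_mul_one_add_two_mul_sq_mul_le hN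
    (by simpa using dotProduct_self_le_card hs) hsL.le hδ.le hδ'
  have h := hLpsd.abs_dotProduct_mulVec_sub_le_of_matNorm_le (by positivity) hLle hMx hq
    (by positivity) hδη
  -- `η = 3ε/8` satisfies `2η + η² ≤ ε` as soon as `ε ≤ 16/9`
  have hη : (2 * (3 * ε / 8) + (3 * ε / 8) ^ 2) * (x ⬝ᵥ L *ᵥ x) ≤ ε * (x ⬝ᵥ L *ᵥ x) := by
    gcongr
    · exact hLpsd.dotProduct_mulVec_self_nonneg _
    · nlinarith
  constructor <;> linarith [abs_le.mp h]

theorem stmt_14 (n : ℕ) (hn : 1 ≤ n) (A : Matrix (Fin n) (Fin n) ℝ)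
    (hAsymm : A.IsSymm) (hAdiag : ∀ i, A i i = 0)
    (hAval : ∀ i j, A i j = -1 ∨ A i j = 0 ∨ A i j = 1)
    (D L : Matrix (Fin n) (Fin n) ℝ)
    (hD : D = Matrix.diagonal fun i => ∑ j, |A i j|)
    (hL : L = D - A)
    (s : Fin n → ℝ) (hs : ∀ i, s i ∈ Set.Icc (-1 : ℝ) 1)
    (hsL : 0 < s ⬝ᵥ L *ᵥ s)
    (ε : ℝ) (hε : 0 < ε) (hε' : ε < 1 / 2)
    (δ : ℝ) (hδ : 0 < δ)
    (hδ' : δ ≤ ε * Real.sqrt (s ⬝ᵥ L *ᵥ s) / (6 * Real.sqrt 2 * (n : ℝ) ^ 2))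
    (q : Fin n → ℝ)
    (hq : matNorm (1 + L) (q - (1 + L)⁻¹ *ᵥ s) ≤
      δ * matNorm (1 + L) ((1 + L)⁻¹ *ᵥ s)) :
    (1 - ε) * (s ⬝ᵥ ((1 + L)⁻¹ * L * (1 + L)⁻¹) *ᵥ s) ≤ q ⬝ᵥ L *ᵥ q ∧
    q ⬝ᵥ L *ᵥ q ≤ (1 + ε) * (s ⬝ᵥ ((1 + L)⁻¹ * L * (1 + L)⁻¹) *ᵥ s) :=
  stmt_14_general n hn A hAsymm hAval D L hD hL s hs hsL ε hε hε' δ hδ hδ' q hq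
end

section
/- Let k ≥ 1 be an integer, ε > 0, m = (1/2)·Σ_{i,j} |A_{ij}| (the number of edges of the signed graph), h = (I + L)^{−1}·𝟙 where 𝟙 is the all-ones vector, and δ = ε/(4k·√(n + 4m)). If h̄ ∈ ℝ^n satisfies ‖h̄ − h‖_{I+L} ≤ δ·‖h‖_{I+L}, then |h_i − h̄_i| ≤ ε/(4k) for every index i. -/
/-!
The signed Laplacian is positive semidefinite, since its quadratic form is
`½ ∑ᵢⱼ |Aᵢⱼ| (xᵢ - sign(Aᵢⱼ) xⱼ)²`; hence `K = I + L` dominates the identity. This gives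
`|xᵢ| ≤ ‖x‖₂ ≤ ‖x‖_K` for every vector `x`, and, for `h = K⁻¹𝟙`,
`‖h‖_K² = ∑ᵢ hᵢ ≤ √n ‖h‖₂ ≤ √n ‖h‖_K`, i.e. `‖h‖_K ≤ √n ≤ √(n + 4m)`. Therefore
`|hᵢ - h̄ᵢ| ≤ ‖h̄ - h‖_K ≤ δ √(n + 4m) = ε / (4k)`.
-/

open Matrix

namespace Matrix

variable {ι : Type*} [Fintype ι] [DecidableEq ι]

noncomputable def signedLaplacian (A : Matrix ι ι ℝ) : Matrix ι ι ℝ :=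
  diagonal (fun i => ∑ j, |A i j|) - A

lemma dotProduct_signedLaplacian_mulVec (A : Matrix ι ι ℝ) (x : ι → ℝ) :
    x ⬝ᵥ signedLaplacian A *ᵥ x = ∑ i, ∑ j, (|A i j| * x i ^ 2 - A i j * (x i * x j)) := by
  simp only [signedLaplacian, sub_mulVec, dotProduct_sub, Finset.sum_sub_distrib]
  congr 1
  · simp only [dotProduct, mulVec_diagonal, Finset.mul_sum, Finset.sum_mul]
    exact Finset.sum_congr rfl fun i _ => Finset.sum_congr rfl fun j _ => by ring
  · simp only [dotProduct, mulVec, Finset.mul_sum]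
    exact Finset.sum_congr rfl fun i _ => Finset.sum_congr rfl fun j _ => by ring

lemma two_mul_mul_mul_le_abs_mul_add_sq (a u v : ℝ) :
    2 * (a * (u * v)) ≤ |a| * (u ^ 2 + v ^ 2) := by
  rcases abs_cases a with ⟨ha, -⟩ | ⟨ha, -⟩ <;> rw [ha] <;>
    nlinarith [mul_nonneg (abs_nonneg a) (sq_nonneg (u - v)),
      mul_nonneg (abs_nonneg a) (sq_nonneg (u + v))]

lemma posSemidef_signedLaplacian {A : Matrix ι ι ℝ} (hA : A.IsSymm) :
    (signedLaplacian A).PosSemidef := by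
  refine posSemidef_iff_dotProduct_mulVec.mpr ⟨?_, fun x => ?_⟩
  · rw [isHermitian_iff_isSymm, signedLaplacian, IsSymm, transpose_sub, diagonal_transpose, hA]
  · have hswap : ∑ i, ∑ j, |A i j| * x i ^ 2 = ∑ i, ∑ j, |A i j| * x j ^ 2 := by
      rw [Finset.sum_comm]
      exact Finset.sum_congr rfl fun i _ => Finset.sum_congr rfl fun j _ => by rw [hA.apply i j]
    have hexpand : ∑ i, ∑ j, (|A i j| * (x i ^ 2 + x j ^ 2) - 2 * (A i j * (x i * x j))) =
        ∑ i, ∑ j, |A i j| * x i ^ 2 + ∑ i, ∑ j, |A i j| * x j ^ 2 -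
          2 * ∑ i, ∑ j, A i j * (x i * x j) := by
      simp only [mul_add, Finset.sum_sub_distrib, Finset.sum_add_distrib, Finset.mul_sum]
    have hnonneg : 0 ≤ ∑ i, ∑ j, (|A i j| * (x i ^ 2 + x j ^ 2) - 2 * (A i j * (x i * x j))) :=
      Finset.sum_nonneg fun i _ => Finset.sum_nonneg fun j _ =>
        sub_nonneg.mpr (two_mul_mul_mul_le_abs_mul_add_sq _ _ _)
    rw [star_trivial, dotProduct_signedLaplacian_mulVec]
    simp only [Finset.sum_sub_distrib]
    linarith

variable {L : Matrix ι ι ℝ}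

lemma dotProduct_self_le_dotProduct_one_add_mulVec (hL : L.PosSemidef) (x : ι → ℝ) :
    x ⬝ᵥ x ≤ x ⬝ᵥ (1 + L) *ᵥ x := by
  rw [add_mulVec, one_mulVec, dotProduct_add, le_add_iff_nonneg_right]
  simpa using hL.dotProduct_mulVec_nonneg x

lemma abs_apply_le_matNorm_one_add (hL : L.PosSemidef) (x : ι → ℝ) (i : ι) :
    |x i| ≤ matNorm (1 + L) x := by
  refine Real.abs_le_sqrt (le_trans ?_ (dotProduct_self_le_dotProduct_one_add_mulVec hL x))
  rw [sq]
  exact Finset.single_le_sum (fun j _ => mul_self_nonneg (x j)) (Finset.mem_univ i)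

lemma matNorm_one_add_inv_mulVec_one_le (hL : L.PosSemidef) :
    matNorm (1 + L) ((1 + L)⁻¹ *ᵥ 1) ≤ √(Fintype.card ι) := by
  set h := (1 + L)⁻¹ *ᵥ 1
  have hdet : IsUnit (1 + L).det :=
    (isUnit_iff_isUnit_det _).mp (PosDef.one.add_posSemidef hL).isUnit
  have hKh : (1 + L) *ᵥ h = 1 := by
    rw [mulVec_mulVec, mul_nonsing_inv _ hdet, one_mulVec]
  have hQ : h ⬝ᵥ (1 + L) *ᵥ h = ∑ i, h i := by rw [hKh, dotProduct_one]
  set Q := h ⬝ᵥ (1 + L) *ᵥ h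
  have hdom : h ⬝ᵥ h ≤ Q := dotProduct_self_le_dotProduct_one_add_mulVec hL h
  have hQ_nonneg : 0 ≤ Q := (Finset.sum_nonneg fun i _ => mul_self_nonneg (h i)).trans hdom
  have hCS : Q ^ 2 ≤ Q * Fintype.card ι := by
    calc Q ^ 2 = (∑ i, h i * 1) ^ 2 := by simp [hQ]
      _ ≤ (∑ i, h i ^ 2) * ∑ _i : ι, (1 : ℝ) ^ 2 := Finset.sum_mul_sq_le_sq_mul_sq _ _ _
      _ = (h ⬝ᵥ h) * Fintype.card ι := by simp [dotProduct, sq]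
      _ ≤ Q * Fintype.card ι := by gcongr
  exact Real.sqrt_le_sqrt (by nlinarith)

end Matrix

theorem stmt_17_general (n : ℕ) (A : Matrix (Fin n) (Fin n) ℝ)
    (hAsymm : A.IsSymm)
    (D L : Matrix (Fin n) (Fin n) ℝ)
    (hD : D = Matrix.diagonal fun i => ∑ j, |A i j|)
    (hL : L = D - A)
    (k : ℕ) (ε : ℝ) (hε : 0 < ε)
    (m : ℝ) (hm : m = (1 / 2) * ∑ i, ∑ j, |A i j|)
    (h : Fin n → ℝ) (hh : h = (1 + L)⁻¹ *ᵥ (fun _ => 1))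
    (δ : ℝ) (hδ : δ = ε / (4 * k * Real.sqrt (n + 4 * m)))
    (hbar : Fin n → ℝ)
    (hhb : matNorm (1 + L) (hbar - h) ≤ δ * matNorm (1 + L) h) :
    ∀ i, |h i - hbar i| ≤ ε / (4 * k) := by
  intro i
  have hLpsd : L.PosSemidef := hL ▸ hD ▸ posSemidef_signedLaplacian hAsymm
  have hm_nonneg : 0 ≤ m := by rw [hm]; positivity
  have hsqrt_pos : 0 < √(n + 4 * m) := Real.sqrt_pos.mpr (by positivity [i.pos])
  have hh_le : matNorm (1 + L) h ≤ √(n + 4 * m) := by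
    refine (hh ▸ matNorm_one_add_inv_mulVec_one_le hLpsd).trans (Real.sqrt_le_sqrt ?_)
    simpa using hm_nonneg
  calc |h i - hbar i| = |(hbar - h) i| := by rw [abs_sub_comm]; rfl
    _ ≤ matNorm (1 + L) (hbar - h) := abs_apply_le_matNorm_one_add hLpsd _ i
    _ ≤ δ * matNorm (1 + L) h := hhb
    _ ≤ δ * √(n + 4 * m) := by gcongr; rw [hδ]; positivity
    _ = ε / (4 * k) := by rw [hδ]; field_simp

theorem stmt_17 (n : ℕ) (hn : 1 ≤ n) (A : Matrix (Fin n) (Fin n) ℝ)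
    (hAsymm : A.IsSymm) (hAdiag : ∀ i, A i i = 0)
    (hAval : ∀ i j, A i j = -1 ∨ A i j = 0 ∨ A i j = 1)
    (D L : Matrix (Fin n) (Fin n) ℝ)
    (hD : D = Matrix.diagonal fun i => ∑ j, |A i j|)
    (hL : L = D - A)
    (k : ℕ) (hk : 1 ≤ k) (ε : ℝ) (hε : 0 < ε)
    (m : ℝ) (hm : m = (1 / 2) * ∑ i, ∑ j, |A i j|)
    (h : Fin n → ℝ) (hh : h = (1 + L)⁻¹ *ᵥ (fun _ => 1))
    (δ : ℝ) (hδ : δ = ε / (4 * k * Real.sqrt (n + 4 * m)))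
    (hbar : Fin n → ℝ)
    (hhb : matNorm (1 + L) (hbar - h) ≤ δ * matNorm (1 + L) h) :
    ∀ i, |h i - hbar i| ≤ ε / (4 * k) :=
  stmt_17_general n A hAsymm D L hD hL k ε hε m hm h hh δ hδ hbar hhb
end
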